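/- Define the map ℱ on functions ψ : ℝ → ℂ by ℱ(ψ)(θ) := e^{i(1+Λ²)θ} · p↓ / (1 − p↑ ψ(Λ² θ)). Then for any two functions ψ₁, ψ₂ : ℝ → ℂ with |ψ₁(θ)| ≤ 1 and |ψ₂(θ)| ≤ 1 for all θ, one has ‖ℱ(ψ₁) − ℱ(ψ₂)‖_∞ ≤ (p↑/p↓) ‖ψ₁ − ψ₂‖_∞, with p↑/p↓ < 1. Consequently, φ_Z is the unique fixed point of ℱ among characteristic functions, and for any characteristic function ψ, ℱⁿ(ψ) converges uniformly to φ_Z with exponential rate. -/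

import Mathlib

open MeasureTheory Filter Finset Topology

open MeasureTheory Filter Finset

/-- The law of the level Markov chain on `ℕ` which, from state `0`, moves to `1` with
probability `puu` and stays at `0` with probability `1 - puu`, and from a state `j > 0`,
moves to `j+1` with probability `pu`, to `j-1` with probability `pd`, and stays at `j`
with probability `1 - pu - pd`; with initial distribution `ν`.  The law is characterized
by its finite-dimensional distributions. -/
def IsLevelChainLaw (puu pu pd : ℝ) (ν : Measure ℕ) (P : Measure (ℕ → ℕ)) : Prop :=
  ∀ (n : ℕ) (a : ℕ → ℕ),
    P {ω | ∀ i ≤ n, ω i = a i} =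
      ν {a 0} * ENNReal.ofReal (∏ i ∈ Finset.range n,
        (if a i = 0 then (if a (i + 1) = 1 then puu else if a (i + 1) = 0 then 1 - puu else 0)
         else if a (i + 1) = a i + 1 then pu
         else if a (i + 1) + 1 = a i then pd
         else if a (i + 1) = a i then 1 - pu - pd
         else 0))

/-- First return time of the path `ω` to level `0`. -/
noncomputable def tau0 (ω : ℕ → ℕ) : ℕ := sInf {j | 1 ≤ j ∧ ω j = 0}

/-- `Z := Σ_{j=0}^{τ₀−1} Λ^{2 L_j}`. -/
noncomputable def Zvar (Λ : ℝ) (ω : ℕ → ℕ) : ℝ :=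
  ∑ j ∈ Finset.range (tau0 ω), Λ ^ (2 * ω j)

/-- The characteristic function `φ_Z(θ) = E₀[e^{iθZ}]` of `Z` under the law `P0`. -/
noncomputable def phiZ (Λ : ℝ) (P0 : Measure (ℕ → ℕ)) (θ : ℝ) : ℂ :=
  ∫ ω, Complex.exp (Complex.I * (θ : ℂ) * ((Zvar Λ ω : ℝ) : ℂ)) ∂P0

/-- `ℓ(θ) := (1 − φ_Z(θ)) / |θ|^{α/2}` for `θ ≠ 0`. -/
noncomputable def ellZ (Λ α : ℝ) (P0 : Measure (ℕ → ℕ)) (θ : ℝ) : ℂ :=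
  (1 - phiZ Λ P0 θ) / ((|θ| ^ (α / 2) : ℝ) : ℂ)


/-- The map `ℱ(ψ)(θ) := e^{i(1+Λ²)θ} p↓ / (1 − p↑ ψ(Λ²θ))`. -/
noncomputable def mapF (Λ pu pd : ℝ) (ψ : ℝ → ℂ) : ℝ → ℂ :=
  fun θ => Complex.exp (Complex.I * (((1 + Λ ^ 2) * θ : ℝ) : ℂ)) * (pd : ℂ) /
    (1 - (pu : ℂ) * ψ (Λ ^ 2 * θ))

/-- `ψ` is the characteristic function of some probability measure on `ℝ`. -/
def IsCharFun (ψ : ℝ → ℂ) : Prop :=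
  ∃ μ : Measure ℝ, IsProbabilityMeasure μ ∧
    ∀ θ : ℝ, ψ θ = ∫ x, Complex.exp (Complex.I * (θ : ℂ) * (x : ℂ)) ∂μ


/-!
A path of the chain from `0` back to `0` is the step `0 → 1` followed by a first passage from `1`
to `0`, and first passages are binary trees: a single down-step, or an up-step followed by a
first passage `2 → 1` (a shifted first passage `1 → 0`) and a first passage `1 → 0`. Summing
`e^{iθZ}` times the path probability over trees, this first-step decomposition becomes the
functional equation `φ_Z = ℱ(φ_Z)`; at `θ = 0` it says that the total probability `S` of the
trees satisfies `S = p↓ + p↑ S²`, and as `S ≤ 1 < p↓/p↑` the chain returns to `0` almost surely.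

Since `|1 - p↑ ψ| ≥ 1 - p↑ = p↓` when `|ψ| ≤ 1`, the map `ℱ` preserves the unit ball of the sup
norm and is `p↑/p↓`-Lipschitz on it; uniqueness of the fixed point and the geometric convergence
of the iterates are the Banach fixed-point argument, carried out pointwise.
-/

noncomputable def expI (t : ℝ) : ℂ := Complex.exp (Complex.I * t)

theorem norm_expI (t : ℝ) : ‖expI t‖ = 1 := Complex.norm_exp_I_mul_ofReal t

theorem expI_add (s t : ℝ) : expI (s + t) = expI s * expI t := by
  simp only [expI, Complex.ofReal_add, mul_add, Complex.exp_add]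

/-- A first passage of the chain from `1` to `0`: `down` is the single step `1 → 0`; `up a b`
steps `1 → 2`, runs through `a` shifted up by one level until it is back at `1`, and then through
`b` down to `0`. -/
inductive Excursion : Type
  | down : Excursion
  | up : Excursion → Excursion → Excursion

namespace Excursion

def length : Excursion → ℕ
  | down => 1
  | up a b => length a + 1 + length b

/-- The level at time `j` of the first-passage path from `1` to `0` (junk `0` after `length`). -/
def level : Excursion → ℕ → ℕ
  | down, 0 => 1
  | down, _ + 1 => 0
  | up _ _, 0 => 1
  | up a b, j + 1 => if j < length a then level a j + 1 else level b (j - length a)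

noncomputable def weight (pu pd : ℝ) : Excursion → ℝ
  | down => pd
  | up a b => pu * weight pu pd a * weight pu pd b

noncomputable def area (Λ : ℝ) : Excursion → ℝ
  | down => Λ ^ 2
  | up a b => Λ ^ 2 + Λ ^ 2 * area Λ a + area Λ b

theorem length_pos (e : Excursion) : 0 < length e := by
  cases e <;> simp [length]

@[simp]
theorem level_zero (e : Excursion) : level e 0 = 1 := by
  cases e <;> rfl

@[simp]
theorem level_length (e : Excursion) : level e (length e) = 0 := by
  induction e with
  | down => rfl
  | up a b _ ihb =>
    rw [length, show length a + 1 + length b = length a + length b + 1 by omega, level]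
    simpa using ihb

theorem level_pos {e : Excursion} {j : ℕ} (hj : j < length e) : 0 < level e j := by
  induction e generalizing j with
  | down => simp_all [length]
  | up a b iha ihb =>
    cases j with
    | zero => simp
    | succ j =>
      simp only [length] at hj
      simp only [level]
      split_ifs
      · omega
      · exact ihb (by omega)

theorem level_up_succ {a b : Excursion} {j : ℕ} (hj : j ≤ length a) :
    level (up a b) (j + 1) = level a j + 1 := by
  rcases hj.lt_or_eq with hj | rfl
  · simp [level, hj]
  · simp [level]

theorem level_up_add (a b : Excursion) (i : ℕ) :
    level (up a b) (length a + 1 + i) = level b i := by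
  rw [show length a + 1 + i = length a + i + 1 by omega, level]
  simp

@[to_additive]
theorem prod_range_length_up {M : Type*} [CommMonoid M] (g : ℕ → ℕ → M) (a b : Excursion) :
    ∏ i ∈ range (length (up a b)), g (level (up a b) i) (level (up a b) (i + 1)) =
      g 1 2 * (∏ i ∈ range (length a), g (level a i + 1) (level a (i + 1) + 1)) *
        ∏ i ∈ range (length b), g (level b i) (level b (i + 1)) := by
  rw [length, prod_range_add, prod_range_succ', mul_comm _ (g _ _)]
  congr 2
  · simp [level_up_succ (Nat.zero_le _)]
  · refine prod_congr rfl fun i hi => ?_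
    rw [level_up_succ (by simp at hi; omega), level_up_succ (by simp at hi; omega)]
  · funext i
    rw [level_up_add, add_assoc, level_up_add]

theorem sum_pow_level (Λ : ℝ) (e : Excursion) :
    ∑ j ∈ range (length e), Λ ^ (2 * level e j) = area Λ e := by
  induction e with
  | down => simp [length, level, area]
  | up a b iha ihb =>
    rw [sum_range_length_up (fun j _ => Λ ^ (2 * j)), area, ← iha, ← ihb, mul_sum]
    simp only [mul_add, pow_add, mul_one, mul_comm (Λ ^ 2)]

theorem eq_of_level_eq {e f : Excursion} (hlen : length e = length f)
    (h : ∀ j ≤ length e, level e j = level f j) : e = f := by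
  induction e generalizing f with
  | down =>
    cases f with
    | down => rfl
    | up c d => have := length_pos c; have := length_pos d; simp [length] at hlen; omega
  | up a b iha ihb =>
    cases f with
    | down => have := length_pos a; have := length_pos b; simp [length] at hlen; omega
    | up c d =>
      simp only [length] at hlen h
      -- the first return of `up a b` to level `1` is at time `length a + 1`
      have hac : length a = length c := by
        by_contra hne
        rcases lt_or_gt_of_ne hne with hlt | hlt
        · have := h (length a + 1) (by omega)
          rw [level_up_succ le_rfl, level_up_succ hlt.le, level_length] at this
          have := level_pos hlt
          omega
        · have := h (length c + 1) (by omega)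
          rw [level_up_succ le_rfl, level_up_succ hlt.le, level_length] at this
          have := level_pos hlt
          omega
      obtain rfl : a = c := iha hac fun j hj => by
        simpa [level_up_succ hj, level_up_succ (hac ▸ hj)] using h (j + 1) (by omega)
      obtain rfl : b = d := ihb (by omega) fun i hi => by
        simpa [level_up_add] using h (length a + 1 + i) (by omega)
      rfl

def toNat : Excursion → ℕ
  | down => 0
  | up a b => Nat.pair (toNat a) (toNat b) + 1

theorem toNat_injective : Function.Injective toNat := by
  intro e f h
  induction e generalizing f with
  | down => cases f <;> simp_all [toNat]
  | up a b iha ihb =>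
    cases f with
    | down => simp [toNat] at h
    | up c d =>
      obtain ⟨hac, hbd⟩ := Nat.pair_eq_pair.mp (Nat.succ_injective h)
      rw [iha hac, ihb hbd]

instance : Countable Excursion := toNat_injective.countable

theorem tsum_eq_down_add_tsum_up {M : Type*} [AddCommGroup M] [TopologicalSpace M] [T2Space M]
    [IsTopologicalAddGroup M] {f : Excursion → M} (hf : Summable f) :
    ∑' e, f e = f down + ∑' p : Excursion × Excursion, f (up p.1 p.2) := by
  classical
  have hup : Function.Injective fun p : Excursion × Excursion => up p.1 p.2 :=
    fun p q h => Prod.ext (up.inj h).1 (up.inj h).2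
  rw [hf.tsum_eq_add_tsum_ite down, ← hup.tsum_eq]
  · simp
  · rintro (_ | ⟨a, b⟩) he
    · simp at he
    · exact ⟨(a, b), rfl⟩

theorem weight_nonneg {pu pd : ℝ} (hpu : 0 ≤ pu) (hpd : 0 ≤ pd) (e : Excursion) :
    0 ≤ weight pu pd e := by
  induction e with
  | down => exact hpd
  | up a b iha ihb => exact mul_nonneg (mul_nonneg hpu iha) ihb

noncomputable def transProb (pu pd : ℝ) (j k : ℕ) : ℝ :=
  if k = j + 1 then pu else if k + 1 = j then pd else if k = j then 1 - pu - pd else 0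

theorem transProb_succ_succ (pu pd : ℝ) (j k : ℕ) :
    transProb pu pd (j + 1) (k + 1) = transProb pu pd j k := by
  simp only [transProb, Nat.add_right_cancel_iff]

theorem prod_transProb_level (pu pd : ℝ) (e : Excursion) :
    ∏ i ∈ range (length e), transProb pu pd (level e i) (level e (i + 1)) = weight pu pd e := by
  induction e with
  | down => simp [length, level, transProb, weight]
  | up a b iha ihb =>
    simp only [prod_range_length_up, transProb_succ_succ, iha, ihb, weight]
    simp [transProb]

def path (e : Excursion) : ℕ → ℕ
  | 0 => 0
  | j + 1 => level e j

def cylinder (e : Excursion) : Set (ℕ → ℕ) := {ω | ∀ i ≤ length e + 1, ω i = path e i}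

theorem measurableSet_cylinder (e : Excursion) : MeasurableSet (cylinder e) := by
  simp only [cylinder, Set.ofPred_forall]
  exact .iInter fun i => .iInter fun _ =>
    measurableSet_eq_fun (measurable_pi_apply i) measurable_const

theorem measure_cylinder {pu pd : ℝ} {P : Measure (ℕ → ℕ)}
    (hP : IsLevelChainLaw 1 pu pd (Measure.dirac 0) P) (e : Excursion) :
    P (cylinder e) = ENNReal.ofReal (weight pu pd e) := by
  rw [cylinder, hP, prod_range_succ', ← prod_transProb_level pu pd e]
  simp only [path, level_zero, Measure.dirac_apply_of_mem (Set.mem_singleton 0), ite_true,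
    one_mul, mul_one]
  refine congrArg ENNReal.ofReal (prod_congr rfl fun i hi => ?_)
  simp only [transProb, (level_pos (mem_range.1 hi)).ne', if_false]
  congr

theorem tau0_of_mem_cylinder {e : Excursion} {ω : ℕ → ℕ} (hω : ω ∈ cylinder e) :
    tau0 ω = length e + 1 := by
  have hmem : length e + 1 ∈ {j | 1 ≤ j ∧ ω j = 0} := by simp [hω _ le_rfl, path]
  refine le_antisymm (Nat.sInf_le hmem) (le_csInf ⟨_, hmem⟩ ?_)
  rintro (_ | j) ⟨hj, hωj⟩
  · omega
  · by_contra! hlt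
    rw [hω _ hlt.le, path] at hωj
    exact (level_pos (by omega)).ne' hωj

theorem Zvar_of_mem_cylinder (Λ : ℝ) {e : Excursion} {ω : ℕ → ℕ} (hω : ω ∈ cylinder e) :
    Zvar Λ ω = 1 + area Λ e := by
  rw [Zvar, tau0_of_mem_cylinder hω, sum_range_succ', ← sum_pow_level, add_comm]
  congr 1
  · simp [hω 0 (by omega), path]
  · exact sum_congr rfl fun i hi => by rw [hω _ (by simp at hi; omega), path]

theorem pairwise_disjoint_cylinder : Pairwise (Function.onFun Disjoint cylinder) := by
  refine fun e f hef => Set.disjoint_left.2 fun ω he hf => hef ?_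
  have hlen : length e = length f := by
    simpa using (tau0_of_mem_cylinder he).symm.trans (tau0_of_mem_cylinder hf)
  refine eq_of_level_eq hlen fun j hj => ?_
  simpa [path] using (he (j + 1) (by omega)).symm.trans (hf (j + 1) (by omega))

variable {pu pd Λ : ℝ}

theorem summable_weight_of_law (hpu : 0 ≤ pu) (hpd : 0 ≤ pd) {P : Measure (ℕ → ℕ)}
    [IsProbabilityMeasure P] (hP : IsLevelChainLaw 1 pu pd (Measure.dirac 0) P) :
    Summable (weight pu pd) ∧ ∑' e, weight pu pd e ≤ 1 := by
  have hle : ∑' e, ENNReal.ofReal (weight pu pd e) ≤ 1 := by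
    rw [← tsum_congr (measure_cylinder hP),
      ← measure_iUnion pairwise_disjoint_cylinder measurableSet_cylinder]
    exact prob_le_one
  have hs : Summable (weight pu pd) := by
    simpa [ENNReal.toReal_ofReal (weight_nonneg hpu hpd _)] using
      ENNReal.summable_toReal (hle.trans_lt ENNReal.one_lt_top).ne
  refine ⟨hs, ?_⟩
  rwa [← ENNReal.ofReal_le_one, ENNReal.ofReal_tsum_of_nonneg (weight_nonneg hpu hpd) hs]

/-- `E₁[e^{iθA}; τ < ∞]` for the area `A = Σ_{j<τ} Λ^{2 L_j}` of the first passage from `1` to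
`0`, written as a series over excursions. -/
noncomputable def passageCharFun (pu pd Λ θ : ℝ) : ℂ :=
  ∑' e, (weight pu pd e : ℂ) * expI (θ * area Λ e)

theorem summable_norm_weight_mul_expI (hw : Summable (weight pu pd)) (t : Excursion → ℝ) :
    Summable fun e => ‖(weight pu pd e : ℂ) * expI (t e)‖ := by
  simpa [norm_expI] using hw.norm

theorem passageCharFun_eq (hw : Summable (weight pu pd)) (θ : ℝ) :
    passageCharFun pu pd Λ θ = pd * expI (Λ ^ 2 * θ) +
      pu * expI (Λ ^ 2 * θ) * passageCharFun pu pd Λ (Λ ^ 2 * θ) * passageCharFun pu pd Λ θ := by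
  have hprod : passageCharFun pu pd Λ (Λ ^ 2 * θ) * passageCharFun pu pd Λ θ =
      ∑' p : Excursion × Excursion, (weight pu pd p.1 : ℂ) * expI (Λ ^ 2 * θ * area Λ p.1) *
        ((weight pu pd p.2 : ℂ) * expI (θ * area Λ p.2)) :=
    tsum_mul_tsum_of_summable_norm (summable_norm_weight_mul_expI hw _)
      (summable_norm_weight_mul_expI hw _)
  rw [mul_assoc _ _ (passageCharFun _ _ _ θ), hprod, ← tsum_mul_left, passageCharFun,
    tsum_eq_down_add_tsum_up (summable_norm_weight_mul_expI hw _).of_norm]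
  congr 1
  · simp only [weight, area, mul_comm θ]
  · refine tsum_congr fun p => ?_
    simp only [weight, area, mul_add, add_assoc, expI_add, Complex.ofReal_mul]
    ring_nf

theorem tsum_weight_eq_one (hpu : 0 ≤ pu) (hlt : pu < pd) (hsum : pu + pd = 1)
    (hw : Summable (weight pu pd)) (hw1 : ∑' e, weight pu pd e ≤ 1) : ∑' e, weight pu pd e = 1 := by
  set S := ∑' e, weight pu pd e
  -- the first-step decomposition at `θ = 0` reads `S = pd + pu S²`, whose roots are `1` and `pd/pu`
  have hrec : S = pd + pu * S * S := by
    have h := passageCharFun_eq (Λ := 0) hw 0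
    simp only [passageCharFun, mul_zero, zero_mul, expI, Complex.ofReal_zero, Complex.exp_zero,
      mul_one, ← Complex.ofReal_tsum] at h
    exact_mod_cast h
  have : (S - 1) * (pu * S - pd) = 0 := by linear_combination -hrec - S * hsum
  rcases mul_eq_zero.1 this with h | h
  · linarith
  · nlinarith [mul_le_mul_of_nonneg_left hw1 hpu]

theorem measure_iUnion_cylinder (hpu : 0 ≤ pu) (hpd : 0 ≤ pd) (hlt : pu < pd)
    (hsum : pu + pd = 1) {P : Measure (ℕ → ℕ)} [IsProbabilityMeasure P]
    (hP : IsLevelChainLaw 1 pu pd (Measure.dirac 0) P) : P (⋃ e, cylinder e) = 1 := by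
  obtain ⟨hw, hw1⟩ := summable_weight_of_law hpu hpd hP
  rw [measure_iUnion pairwise_disjoint_cylinder measurableSet_cylinder,
    tsum_congr (measure_cylinder hP), ← ENNReal.ofReal_tsum_of_nonneg (weight_nonneg hpu hpd) hw,
    tsum_weight_eq_one hpu hlt hsum hw hw1, ENNReal.ofReal_one]

theorem phiZ_eq (hpu : 0 ≤ pu) (hpd : 0 ≤ pd) (hlt : pu < pd) (hsum : pu + pd = 1)
    {P : Measure (ℕ → ℕ)} [IsProbabilityMeasure P]
    (hP : IsLevelChainLaw 1 pu pd (Measure.dirac 0) P) (θ : ℝ) :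
    phiZ Λ P θ = expI θ * passageCharFun pu pd Λ θ := by
  set f : (ℕ → ℕ) → ℂ := fun ω => Complex.exp (Complex.I * θ * (Zvar Λ ω : ℂ))
  have hf : ∀ e, ∀ ω ∈ cylinder e, f ω = expI (θ * (1 + area Λ e)) := fun e ω hω => by
    simp only [f, expI, Zvar_of_mem_cylinder Λ hω, Complex.ofReal_mul, mul_assoc]
  have hcover : ∀ᵐ ω ∂P, ω ∈ ⋃ e, cylinder e :=
    mem_ae_iff.2 ((prob_compl_eq_zero_iff (.iUnion measurableSet_cylinder)).2
      (measure_iUnion_cylinder hpu hpd hlt hsum hP))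
  have hint : IntegrableOn f (⋃ e, cylinder e) P := by
    refine Integrable.of_bound (aestronglyMeasurable_iUnion_iff.2 fun e => ?_) 1
      (.of_forall fun ω => ?_)
    · exact aestronglyMeasurable_const.congr
        (ae_restrict_of_forall_mem (measurableSet_cylinder e) fun ω hω => (hf e ω hω).symm)
    · simp only [f, mul_assoc, ← Complex.ofReal_mul, Complex.norm_exp_I_mul_ofReal, le_refl]
  calc phiZ Λ P θ = ∫ ω in ⋃ e, cylinder e, f ω ∂P := by
        rw [Measure.restrict_eq_self_of_ae_mem hcover]; rfl
    _ = ∑' e, ∫ ω in cylinder e, f ω ∂P :=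
        integral_iUnion measurableSet_cylinder pairwise_disjoint_cylinder hint
    _ = ∑' e, (weight pu pd e : ℂ) * expI (θ * (1 + area Λ e)) := tsum_congr fun e => by
        rw [setIntegral_congr_fun (measurableSet_cylinder e) (hf e), setIntegral_const,
          measureReal_def, measure_cylinder hP, ENNReal.toReal_ofReal (weight_nonneg hpu hpd e),
          Complex.real_smul]
    _ = expI θ * passageCharFun pu pd Λ θ := by
        rw [passageCharFun, ← tsum_mul_left]
        refine tsum_congr fun e => ?_
        rw [mul_add, mul_one, expI_add]
        ring

end Excursion

theorem norm_integral_exp_I_mul_le_one {Ω : Type*} [MeasurableSpace Ω] (μ : Measure Ω)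
    [IsProbabilityMeasure μ] (X : Ω → ℝ) (θ : ℝ) :
    ‖∫ ω, Complex.exp (Complex.I * θ * X ω) ∂μ‖ ≤ 1 := by
  simpa using norm_integral_le_of_norm_le_const (μ := μ) (C := 1) (.of_forall fun ω => by
    rw [mul_assoc, ← Complex.ofReal_mul, Complex.norm_exp_I_mul_ofReal])

theorem IsCharFun.norm_le_one {ψ : ℝ → ℂ} (hψ : IsCharFun ψ) (θ : ℝ) : ‖ψ θ‖ ≤ 1 := by
  obtain ⟨μ, _, hμ⟩ := hψ
  rw [hμ]
  exact norm_integral_exp_I_mul_le_one μ id θ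

theorem norm_phiZ_le_one (Λ : ℝ) (P : Measure (ℕ → ℕ)) [IsProbabilityMeasure P] (θ : ℝ) :
    ‖phiZ Λ P θ‖ ≤ 1 :=
  norm_integral_exp_I_mul_le_one P (Zvar Λ) θ

theorem one_sub_le_norm_one_sub_mul {r : ℝ} (hr : 0 ≤ r) {z : ℂ} (hz : ‖z‖ ≤ 1) :
    1 - r ≤ ‖1 - r * z‖ :=
  calc 1 - r ≤ ‖(1 : ℂ)‖ - ‖r * z‖ := by
        rw [norm_one, norm_mul, Complex.norm_of_nonneg hr]
        nlinarith [norm_nonneg z]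
    _ ≤ ‖1 - r * z‖ := norm_sub_norm_le _ _

section mapF

variable {Λ pu pd : ℝ}

theorem mapF_apply (ψ : ℝ → ℂ) (θ : ℝ) :
    mapF Λ pu pd ψ θ = expI ((1 + Λ ^ 2) * θ) * pd / (1 - pu * ψ (Λ ^ 2 * θ)) := rfl

theorem norm_mapF_le_one (hpu : 0 ≤ pu) (hpd : 0 < pd) (hsum : pu + pd = 1) {ψ : ℝ → ℂ}
    (hψ : ∀ θ, ‖ψ θ‖ ≤ 1) (θ : ℝ) : ‖mapF Λ pu pd ψ θ‖ ≤ 1 := by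
  have hD : pd ≤ ‖1 - pu * ψ (Λ ^ 2 * θ)‖ := by
    simpa [← hsum] using one_sub_le_norm_one_sub_mul hpu (hψ _)
  rw [mapF_apply, norm_div, norm_mul, norm_expI, one_mul, Complex.norm_of_nonneg hpd.le]
  exact div_le_one_of_le₀ hD (norm_nonneg _)

theorem norm_mapF_sub_le (hpu : 0 ≤ pu) (hpd : 0 < pd) (hsum : pu + pd = 1) {ψ₁ ψ₂ : ℝ → ℂ}
    (h₁ : ∀ θ, ‖ψ₁ θ‖ ≤ 1) (h₂ : ∀ θ, ‖ψ₂ θ‖ ≤ 1) (θ : ℝ) :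
    ‖mapF Λ pu pd ψ₁ θ - mapF Λ pu pd ψ₂ θ‖ ≤ pu / pd * ‖ψ₁ (Λ ^ 2 * θ) - ψ₂ (Λ ^ 2 * θ)‖ := by
  rw [mapF_apply, mapF_apply]
  have hE := norm_expI ((1 + Λ ^ 2) * θ)
  have ha := h₁ (Λ ^ 2 * θ)
  have hb := h₂ (Λ ^ 2 * θ)
  generalize expI ((1 + Λ ^ 2) * θ) = E at hE ⊢
  generalize ψ₁ (Λ ^ 2 * θ) = a at ha ⊢
  generalize ψ₂ (Λ ^ 2 * θ) = b at hb ⊢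
  replace ha : pd ≤ ‖1 - pu * a‖ := by simpa [← hsum] using one_sub_le_norm_one_sub_mul hpu ha
  replace hb : pd ≤ ‖1 - pu * b‖ := by simpa [← hsum] using one_sub_le_norm_one_sub_mul hpu hb
  have hdiff : E * pd / (1 - pu * a) - E * pd / (1 - pu * b) =
      E * pd * (pu * (a - b)) / ((1 - pu * a) * (1 - pu * b)) := by
    rw [div_sub_div _ _ (norm_pos_iff.1 (hpd.trans_le ha)) (norm_pos_iff.1 (hpd.trans_le hb))]
    ring
  rw [hdiff, norm_div, norm_mul, norm_mul, norm_mul, norm_mul, hE,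
    Complex.norm_of_nonneg hpd.le, Complex.norm_of_nonneg hpu, one_mul]
  calc pd * (pu * ‖a - b‖) / (‖1 - pu * a‖ * ‖1 - pu * b‖)
      ≤ pd * (pu * ‖a - b‖) / (pd * pd) := by gcongr
    _ = pu / pd * ‖a - b‖ := by field_simp

theorem mapF_phiZ (hpu : 0 ≤ pu) (hpd : 0 < pd) (hlt : pu < pd) (hsum : pu + pd = 1)
    {P : Measure (ℕ → ℕ)} [IsProbabilityMeasure P]
    (hP : IsLevelChainLaw 1 pu pd (Measure.dirac 0) P) : mapF Λ pu pd (phiZ Λ P) = phiZ Λ P := by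
  obtain ⟨hw, -⟩ := Excursion.summable_weight_of_law hpu hpd.le hP
  funext θ
  have hD : 1 - pu * phiZ Λ P (Λ ^ 2 * θ) ≠ 0 := by
    refine norm_pos_iff.1 (hpd.trans_le ?_)
    simpa [← hsum] using one_sub_le_norm_one_sub_mul hpu (norm_phiZ_le_one Λ P _)
  rw [mapF_apply, div_eq_iff hD]
  simp only [Excursion.phiZ_eq hpu hpd.le hlt hsum hP, add_mul, one_mul, expI_add]
  linear_combination (-expI θ) * Excursion.passageCharFun_eq (Λ := Λ) hw θ

end mapF

section Contraction

variable {α E : Type*} {T : (α → E) → α → E} {q : ℝ}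

theorem norm_iterate_sub_le [SeminormedAddCommGroup E]
    (hT : Set.MapsTo T {ψ | ∀ x, ‖ψ x‖ ≤ 1} {ψ | ∀ x, ‖ψ x‖ ≤ 1})
    (hlip : ∀ ψ₁ ψ₂ : α → E, (∀ x, ‖ψ₁ x‖ ≤ 1) → (∀ x, ‖ψ₂ x‖ ≤ 1) → ∀ d : ℝ,
      (∀ x, ‖ψ₁ x - ψ₂ x‖ ≤ d) → ∀ x, ‖T ψ₁ x - T ψ₂ x‖ ≤ q * d)
    {ψ₁ ψ₂ : α → E} (h₁ : ∀ x, ‖ψ₁ x‖ ≤ 1) (h₂ : ∀ x, ‖ψ₂ x‖ ≤ 1) (n : ℕ) (x : α) :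
    ‖T^[n] ψ₁ x - T^[n] ψ₂ x‖ ≤ 2 * q ^ n := by
  induction n generalizing x with
  | zero =>
    calc ‖ψ₁ x - ψ₂ x‖ ≤ ‖ψ₁ x‖ + ‖ψ₂ x‖ := norm_sub_le _ _
      _ ≤ 2 * q ^ 0 := by linarith [h₁ x, h₂ x, pow_zero q]
  | succ n ih =>
    rw [Function.iterate_succ_apply', Function.iterate_succ_apply']
    calc _ ≤ q * (2 * q ^ n) := hlip _ _ (hT.iterate n h₁) (hT.iterate n h₂) _ ih x
      _ = 2 * q ^ (n + 1) := by ring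

theorem eq_of_isFixedPt [NormedAddCommGroup E] (hq : 0 ≤ q) (hq1 : q < 1)
    (hT : Set.MapsTo T {ψ | ∀ x, ‖ψ x‖ ≤ 1} {ψ | ∀ x, ‖ψ x‖ ≤ 1})
    (hlip : ∀ ψ₁ ψ₂ : α → E, (∀ x, ‖ψ₁ x‖ ≤ 1) → (∀ x, ‖ψ₂ x‖ ≤ 1) → ∀ d : ℝ,
      (∀ x, ‖ψ₁ x - ψ₂ x‖ ≤ d) → ∀ x, ‖T ψ₁ x - T ψ₂ x‖ ≤ q * d)
    {ψ₁ ψ₂ : α → E} (h₁ : ∀ x, ‖ψ₁ x‖ ≤ 1) (h₂ : ∀ x, ‖ψ₂ x‖ ≤ 1)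
    (hf₁ : Function.IsFixedPt T ψ₁) (hf₂ : Function.IsFixedPt T ψ₂) : ψ₁ = ψ₂ := by
  funext x
  have hlim : Tendsto (fun n : ℕ => 2 * q ^ n) atTop (𝓝 0) := by
    simpa using (tendsto_pow_atTop_nhds_zero_of_lt_one hq hq1).const_mul 2
  have hle : ‖ψ₁ x - ψ₂ x‖ ≤ 0 := ge_of_tendsto' hlim fun n => by
    simpa [(hf₁.iterate n).eq, (hf₂.iterate n).eq] using
      norm_iterate_sub_le hT hlip h₁ h₂ n x
  exact sub_eq_zero.1 (norm_le_zero_iff.1 hle)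

end Contraction

theorem mapF_contraction_general (Λ pu pd : ℝ)
    (hpu : 0 < pu) (hpd : 0 < pd) (hsum : pu + pd = 1)
    (hratio1 : 1 < pd / pu)
    (P0 : Measure (ℕ → ℕ)) [IsProbabilityMeasure P0]
    (hP0 : IsLevelChainLaw 1 pu pd (Measure.dirac 0) P0) :
    pu / pd < 1 ∧
    (∀ ψ₁ ψ₂ : ℝ → ℂ, (∀ θ, ‖ψ₁ θ‖ ≤ 1) → (∀ θ, ‖ψ₂ θ‖ ≤ 1) →
      (⨆ θ : ℝ, ‖mapF Λ pu pd ψ₁ θ - mapF Λ pu pd ψ₂ θ‖) ≤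
        (pu / pd) * ⨆ θ : ℝ, ‖ψ₁ θ - ψ₂ θ‖) ∧
    mapF Λ pu pd (phiZ Λ P0) = phiZ Λ P0 ∧
    (∀ ψ : ℝ → ℂ, IsCharFun ψ → mapF Λ pu pd ψ = ψ → ψ = phiZ Λ P0) ∧
    (∀ ψ : ℝ → ℂ, IsCharFun ψ → ∃ C : ℝ, ∀ n : ℕ, ∀ θ : ℝ,
      ‖(mapF Λ pu pd)^[n] ψ θ - phiZ Λ P0 θ‖ ≤ C * (pu / pd) ^ n) := by
  have hlt : pu < pd := (one_lt_div hpu).1 hratio1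
  have hq : 0 ≤ pu / pd := by positivity
  have hq1 : pu / pd < 1 := (div_lt_one hpd).2 hlt
  have hmaps : Set.MapsTo (mapF Λ pu pd) {ψ | ∀ θ, ‖ψ θ‖ ≤ 1} {ψ | ∀ θ, ‖ψ θ‖ ≤ 1} :=
    fun ψ hψ => norm_mapF_le_one hpu.le hpd hsum hψ
  have hlip : ∀ ψ₁ ψ₂ : ℝ → ℂ, (∀ θ, ‖ψ₁ θ‖ ≤ 1) → (∀ θ, ‖ψ₂ θ‖ ≤ 1) → ∀ d : ℝ,
      (∀ θ, ‖ψ₁ θ - ψ₂ θ‖ ≤ d) → ∀ θ, ‖mapF Λ pu pd ψ₁ θ - mapF Λ pu pd ψ₂ θ‖ ≤ pu / pd * d :=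
    fun ψ₁ ψ₂ h₁ h₂ d hd θ =>
      (norm_mapF_sub_le hpu.le hpd hsum h₁ h₂ θ).trans (mul_le_mul_of_nonneg_left (hd _) hq)
  have hφ := norm_phiZ_le_one Λ P0
  have hfix := mapF_phiZ (Λ := Λ) hpu.le hpd hlt hsum hP0
  refine ⟨hq1, fun ψ₁ ψ₂ h₁ h₂ => ?_, hfix, fun ψ hψ hψfix =>
    eq_of_isFixedPt hq hq1 hmaps hlip hψ.norm_le_one hφ hψfix hfix, fun ψ hψ => ⟨2, fun n θ => ?_⟩⟩
  · have hbdd : BddAbove (Set.range fun θ => ‖ψ₁ θ - ψ₂ θ‖) :=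
      ⟨2, Set.forall_mem_range.2 fun θ => (norm_sub_le _ _).trans (by linarith [h₁ θ, h₂ θ])⟩
    exact ciSup_le (hlip ψ₁ ψ₂ h₁ h₂ _ (le_ciSup hbdd))
  · simpa only [Function.iterate_fixed hfix n] using
      norm_iterate_sub_le hmaps hlip hψ.norm_le_one hφ n θ

/-- The map `ℱ` is a `(p↑/p↓)`-contraction (in sup norm) on functions bounded
by 1; consequently `φ_Z` is its unique fixed point among characteristic functions, and for any
characteristic function `ψ`, `ℱⁿ(ψ) → φ_Z` uniformly with exponential rate. -/
theorem mapF_contraction (Λ pu pd : ℝ) (hΛ : 1 < Λ)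
    (hpu : 0 < pu) (hpd : 0 < pd) (hpu1 : pu < 1) (hpd1 : pd < 1) (hsum : pu + pd = 1)
    (hratio1 : 1 < pd / pu) (hratio2 : pd / pu < Λ ^ 2)
    (P0 : Measure (ℕ → ℕ)) [IsProbabilityMeasure P0]
    (hP0 : IsLevelChainLaw 1 pu pd (Measure.dirac 0) P0) :
    pu / pd < 1 ∧
    (∀ ψ₁ ψ₂ : ℝ → ℂ, (∀ θ, ‖ψ₁ θ‖ ≤ 1) → (∀ θ, ‖ψ₂ θ‖ ≤ 1) →
      (⨆ θ : ℝ, ‖mapF Λ pu pd ψ₁ θ - mapF Λ pu pd ψ₂ θ‖) ≤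
        (pu / pd) * ⨆ θ : ℝ, ‖ψ₁ θ - ψ₂ θ‖) ∧
    mapF Λ pu pd (phiZ Λ P0) = phiZ Λ P0 ∧
    (∀ ψ : ℝ → ℂ, IsCharFun ψ → mapF Λ pu pd ψ = ψ → ψ = phiZ Λ P0) ∧
    (∀ ψ : ℝ → ℂ, IsCharFun ψ → ∃ C : ℝ, ∀ n : ℕ, ∀ θ : ℝ,
      ‖(mapF Λ pu pd)^[n] ψ θ - phiZ Λ P0 θ‖ ≤ C * (pu / pd) ^ n) :=
  mapF_contraction_general Λ pu pd hpu hpd hsum hratio1 P0 hP0
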